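/- Let α be a unit-magnitude complex number such that 1, α, α², α³ are pairwise non-±-equal, and let U = {1, α, α², α³}. Then R(U) is a subring of ℂ (it contains 0 and 1 and is closed under addition, negation, and multiplication). -/

import Mathlib

open Complex

/-- The bracket `[x,y] = x * conj y - y * conj x`. -/
noncomputable def brkt (x y : ℂ) : ℂ := x * (starRingEnd ℂ) y - y * (starRingEnd ℂ) x

/-- `lineInt α β p q` is the intersection point `I_{α,β}(p,q)` of the line through `p`
with direction `α` and the line through `q` with direction `β` (for unit `α ≠ ±β`),
given by the formula of Buhler et al. -/
noncomputable def lineInt (α β p q : ℂ) : ℂ :=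
  brkt α p / brkt α β * β + brkt β q / brkt β α * α

/-- The sets `S n` in the inductive construction. -/
def stepSet (U : Set ℂ) : ℕ → Set ℂ
  | 0 => {0, 1}
  | n + 1 => {z | ∃ α ∈ U, ∃ β ∈ U, α ≠ β ∧ α ≠ -β ∧
      ∃ p ∈ stepSet U n, ∃ q ∈ stepSet U n, z = lineInt α β p q}

/-- `RU U = ⋃ n, S n`. -/
def RU (U : Set ℂ) : Set ℂ := ⋃ n, stepSet U n

/-- Elementary monomials of `U`. -/
def IsElem (U : Set ℂ) (z : ℂ) : Prop :=
  ∃ α ∈ U, ∃ β ∈ U, α ≠ β ∧ α ≠ -β ∧ z = lineInt α β 0 1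

/-- Monomials of `U`, defined inductively. -/
inductive IsMonomial (U : Set ℂ) : ℂ → Prop
  | elementary (α β : ℂ) (hα : α ∈ U) (hβ : β ∈ U) (h1 : α ≠ β) (h2 : α ≠ -β) :
      IsMonomial U (lineInt α β 0 1)
  | step (α β m : ℂ) (hα : α ∈ U) (hβ : β ∈ U) (h1 : α ≠ β) (h2 : α ≠ -β)
      (hm : IsMonomial U m) : IsMonomial U (lineInt α β 0 m)

/-- `P`: the real numbers arising as length-two monomials `I_{γ,δ}(0,z)` on the real axis. -/
def projSet (U : Set ℂ) : Set ℝ :=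
  {r | ∃ γ ∈ U, ∃ δ ∈ U, γ ≠ δ ∧ γ ≠ -δ ∧ ∃ z, IsElem U z ∧ (r : ℂ) = lineInt γ δ 0 z}

/-- `m` is a `ℤ[P]`-linear combination of elementary monomials of `U`. -/
def IsZPComb (U : Set ℂ) (m : ℂ) : Prop :=
  ∃ (n : ℕ) (c : Fin n → ℝ) (z : Fin n → ℂ),
    (∀ i, c i ∈ Subring.closure (projSet U)) ∧ (∀ i, IsElem U (z i)) ∧
    m = ∑ i, (c i : ℂ) * z i

/-!
Splitting `I_{a,b}(p, q)` along its two directions writes every point of `R(U)` other than `0`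
and `1` as `r a + s b` with `r, s` real, `a, b ∈ U` and `r a, s b ∈ R(U)`. Since `I_{a,b}`
commutes with translations, negation and real scalings, `R(U)` is closed under addition as soon
as it contains `2`, under negation as soon as it contains `-1`, and under multiplication by its
own real points.

For `U = {1, α, α², α³}` let `τ = 2 Re α`, so that `τ α = 1 + α²`. Projecting a point `r αᵏ` of
`R(U)` onto the real axis along `α` or `α²` gives the real points `r / τ` (`k = 1`), `-r`
(`k = 2`), `-r / τ` and `-r τ` (`k = 3`) of `R(U)`. Hence `R(U) = A + A α²` for
`A = R(U) ∩ ℝ`, and `τ² ∈ A` (project `-τ α³ ∈ R(U)` along `α`). As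
`α⁴ = (τ² - 2) α² - 1`, this gives `α² R(U) ⊆ R(U)`, and so `R(U)` is closed under
multiplication.
-/

open ComplexConjugate

lemma brkt_swap (x y : ℂ) : brkt y x = -brkt x y := by
  unfold brkt; ring

lemma brkt_ne_zero_comm {x y : ℂ} : brkt y x ≠ 0 ↔ brkt x y ≠ 0 := by
  rw [brkt_swap, neg_ne_zero]

lemma brkt_add (x y z : ℂ) : brkt x (y + z) = brkt x y + brkt x z := by
  simp only [brkt, map_add]; ring

lemma brkt_ofReal_mul (x y : ℂ) (r : ℝ) : brkt x (r * y) = r * brkt x y := by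
  simp only [brkt, map_mul, conj_ofReal]; ring

lemma conj_brkt (x y : ℂ) : conj (brkt x y) = -brkt x y := by
  simp only [brkt, map_sub, map_mul, conj_conj]; ring

lemma ofReal_re_brkt_div_brkt (x y z w : ℂ) :
    ((brkt x y / brkt z w).re : ℂ) = brkt x y / brkt z w := by
  rw [← conj_eq_iff_re, map_div₀, conj_brkt, conj_brkt, neg_div_neg_eq]

lemma brkt_mul_mul {u : ℂ} (hu : ‖u‖ = 1) (x y : ℂ) : brkt (u * x) (u * y) = brkt x y := by
  have hu' : u * conj u = 1 := by rw [mul_conj', hu]; norm_num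
  simp only [brkt, map_mul]
  linear_combination (x * conj y - y * conj x) * hu'

lemma brkt_sq_one (x : ℂ) : brkt (x ^ 2) 1 = ((2 * x.re : ℝ) : ℂ) * brkt x 1 := by
  rw [← add_conj]; simp only [brkt, map_pow, map_one]; ring

lemma brkt_ne_zero {a b : ℂ} (ha : ‖a‖ = 1) (hb : ‖b‖ = 1) (h : a ≠ b) (h' : a ≠ -b) :
    brkt a b ≠ 0 := by
  have ha0 : a ≠ 0 := by rintro rfl; simp at ha
  have hb0 : b ≠ 0 := by rintro rfl; simp at hb
  have key : brkt a b * (a * b) = (a - b) * (a + b) := by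
    rw [brkt, ← inv_eq_conj ha, ← inv_eq_conj hb]; field_simp; ring
  intro hz
  rw [hz, zero_mul, eq_comm, mul_eq_zero] at key
  rcases key with e | e
  · exact h (sub_eq_zero.1 e)
  · exact h' (eq_neg_of_add_eq_zero_left e)

lemma ne_and_ne_neg_of_brkt_ne_zero {a b : ℂ} (h : brkt a b ≠ 0) : a ≠ b ∧ a ≠ -b := by
  constructor <;> rintro rfl <;> simp [brkt] at h

lemma lineInt_eq_add (a b p q : ℂ) :
    lineInt a b p q = lineInt b a 0 p + lineInt a b 0 q := by
  simp only [lineInt, brkt, map_zero]; ring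

lemma lineInt_zero_left (a b q : ℂ) : lineInt a b 0 q = brkt b q / brkt b a * a := by
  simp [lineInt, brkt]

lemma exists_lineInt_zero_left_eq_ofReal_mul (a b q : ℂ) :
    ∃ r : ℝ, lineInt a b 0 q = r * a :=
  ⟨_, by rw [lineInt_zero_left, ofReal_re_brkt_div_brkt]⟩

lemma lineInt_zero_ofReal_mul {a b e : ℂ} {t : ℝ} (hD : brkt b a ≠ 0)
    (ht : brkt b e = t * brkt b a) (s : ℝ) :
    lineInt a b 0 (s * e) = ((s * t : ℝ) : ℂ) * a := by
  rw [lineInt_zero_left, brkt_ofReal_mul, ht]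
  field_simp
  push_cast
  ring

lemma lineInt_add_const {a b : ℂ} (hD : brkt a b ≠ 0) (p q w : ℂ) :
    lineInt a b (p + w) (q + w) = lineInt a b p q + w := by
  have hD' := brkt_ne_zero_comm.2 hD
  simp only [lineInt]
  field_simp
  simp only [brkt, map_add]
  ring

lemma lineInt_self {a b : ℂ} (hD : brkt a b ≠ 0) (w : ℂ) : lineInt a b w w = w := by
  simpa [lineInt, brkt] using lineInt_add_const hD 0 0 w

lemma lineInt_neg (a b p q : ℂ) : lineInt a b (-p) (-q) = -lineInt a b p q := by
  simp only [lineInt, brkt, map_neg]; ring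

lemma lineInt_ofReal_mul (a b p q : ℂ) (r : ℝ) :
    lineInt a b (r * p) (r * q) = r * lineInt a b p q := by
  simp only [lineInt, brkt_ofReal_mul]; ring

lemma lineInt_ofReal_mul_ofReal_mul {a b : ℂ} (hD : brkt a b ≠ 0) (x y : ℝ) :
    lineInt a b (x * b) (y * a) = x * b + y * a := by
  have hD' := brkt_ne_zero_comm.2 hD
  simp only [lineInt, brkt_ofReal_mul]
  field_simp

lemma RU.zero_mem {U : Set ℂ} : (0 : ℂ) ∈ RU U := Set.mem_iUnion.2 ⟨0, by simp [stepSet]⟩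

lemma RU.one_mem {U : Set ℂ} : (1 : ℂ) ∈ RU U := Set.mem_iUnion.2 ⟨0, by simp [stepSet]⟩

lemma stepSet_subset_succ {U : Set ℂ} {a b : ℂ} (ha : a ∈ U) (hb : b ∈ U)
    (hD : brkt a b ≠ 0) (n : ℕ) : stepSet U n ⊆ stepSet U (n + 1) := fun p hp =>
  ⟨a, ha, b, hb, (ne_and_ne_neg_of_brkt_ne_zero hD).1, (ne_and_ne_neg_of_brkt_ne_zero hD).2,
    p, hp, p, hp, (lineInt_self hD p).symm⟩

lemma RU.lineInt_mem {U : Set ℂ} {a b p q : ℂ} (ha : a ∈ U) (hb : b ∈ U)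
    (hD : brkt a b ≠ 0) (hp : p ∈ RU U) (hq : q ∈ RU U) : lineInt a b p q ∈ RU U := by
  obtain ⟨m, hm⟩ := Set.mem_iUnion.1 hp
  obtain ⟨n, hn⟩ := Set.mem_iUnion.1 hq
  have mono : Monotone (stepSet U) := monotone_nat_of_le_succ (stepSet_subset_succ ha hb hD)
  obtain ⟨h, h'⟩ := ne_and_ne_neg_of_brkt_ne_zero hD
  exact Set.mem_iUnion.2 ⟨max m n + 1, a, ha, b, hb, h, h',
    p, mono (le_max_left m n) hm, q, mono (le_max_right m n) hn, rfl⟩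

theorem RU.induction {U : Set ℂ} {P : ℂ → Prop} (zero : P 0) (one : P 1)
    (step : ∀ a ∈ U, ∀ b ∈ U, a ≠ b → a ≠ -b → ∀ p ∈ RU U, ∀ q ∈ RU U,
      P p → P q → P (lineInt a b p q)) {z : ℂ} (hz : z ∈ RU U) : P z := by
  obtain ⟨n, hn⟩ := Set.mem_iUnion.1 hz
  clear hz
  induction n generalizing z with
  | zero => rcases hn with rfl | rfl <;> assumption
  | succ n ih =>
    obtain ⟨a, ha, b, hb, h, h', p, hp, q, hq, rfl⟩ := hn
    exact step a ha b hb h h' p (Set.mem_iUnion.2 ⟨n, hp⟩) q (Set.mem_iUnion.2 ⟨n, hq⟩)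
      (ih hp) (ih hq)

namespace RU

variable {U : Set ℂ}

lemma neg_mem_of_neg_one_mem (hU : ∀ u ∈ U, ‖u‖ = 1) (hneg : (-1 : ℂ) ∈ RU U) {z : ℂ}
    (hz : z ∈ RU U) : -z ∈ RU U := by
  refine RU.induction (P := fun z => -z ∈ RU U) (by simpa using zero_mem) hneg
    (fun a ha b hb h h' p _ q _ hp hq => ?_) hz
  rw [← lineInt_neg]
  exact lineInt_mem ha hb (brkt_ne_zero (hU a ha) (hU b hb) h h') hp hq

lemma ofReal_mul_mem (hU : ∀ u ∈ U, ‖u‖ = 1) {r : ℝ} (hr : (r : ℂ) ∈ RU U) {z : ℂ}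
    (hz : z ∈ RU U) : r * z ∈ RU U := by
  refine RU.induction (P := fun z => r * z ∈ RU U) (by simpa using zero_mem)
    (by simpa using hr) (fun a ha b hb h h' p _ q _ hp hq => ?_) hz
  rw [← lineInt_ofReal_mul]
  exact lineInt_mem ha hb (brkt_ne_zero (hU a ha) (hU b hb) h h') hp hq

lemma add_mem_of_one_add_mem (hU : ∀ u ∈ U, ‖u‖ = 1) {w : ℂ} (hw : w ∈ RU U)
    (h1w : 1 + w ∈ RU U) {z : ℂ} (hz : z ∈ RU U) : z + w ∈ RU U := by
  refine RU.induction (P := fun z => z + w ∈ RU U) (by simpa using hw) h1w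
    (fun a ha b hb h h' p _ q _ hp hq => ?_) hz
  have hD := brkt_ne_zero (hU a ha) (hU b hb) h h'
  rw [← lineInt_add_const hD]
  exact lineInt_mem ha hb hD hp hq

lemma add_mem_of_two_mem (hU : ∀ u ∈ U, ‖u‖ = 1) (htwo : (2 : ℂ) ∈ RU U) {z w : ℂ}
    (hz : z ∈ RU U) (hw : w ∈ RU U) : z + w ∈ RU U := by
  have one_add : ∀ {x}, x ∈ RU U → 1 + x ∈ RU U := fun {x} hx =>
    add_comm x 1 ▸ add_mem_of_one_add_mem hU one_mem (by norm_num [htwo]) hx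
  exact add_mem_of_one_add_mem hU hw (one_add hw) hz

lemma eq_zero_or_eq_one_or_eq_add (hU : ∀ u ∈ U, ‖u‖ = 1) {z : ℂ} (hz : z ∈ RU U) :
    z = 0 ∨ z = 1 ∨ ∃ a ∈ U, ∃ b ∈ U, ∃ r s : ℝ,
      (r : ℂ) * a ∈ RU U ∧ (s : ℂ) * b ∈ RU U ∧ z = r * a + s * b := by
  refine RU.induction (P := fun z => z = 0 ∨ z = 1 ∨ ∃ a ∈ U, ∃ b ∈ U, ∃ r s : ℝ,
      (r : ℂ) * a ∈ RU U ∧ (s : ℂ) * b ∈ RU U ∧ z = r * a + s * b) (Or.inl rfl)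
    (Or.inr (Or.inl rfl)) (fun a ha b hb h h' p hp q hq _ _ => Or.inr (Or.inr ?_)) hz
  have hD := brkt_ne_zero (hU a ha) (hU b hb) h h'
  obtain ⟨r, hr⟩ := exists_lineInt_zero_left_eq_ofReal_mul b a p
  obtain ⟨s, hs⟩ := exists_lineInt_zero_left_eq_ofReal_mul a b q
  exact ⟨b, hb, a, ha, r, s, hr ▸ lineInt_mem hb ha (brkt_ne_zero_comm.2 hD) zero_mem hp,
    hs ▸ lineInt_mem ha hb hD zero_mem hq, by rw [lineInt_eq_add, hr, hs]⟩

lemma ofReal_mul_mem_of_brkt_eq {a b e : ℂ} {s t : ℝ} (ha : a ∈ U) (hb : b ∈ U)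
    (hD : brkt b a ≠ 0) (ht : brkt b e = t * brkt b a) (he : (s : ℂ) * e ∈ RU U) :
    ((s * t : ℝ) : ℂ) * a ∈ RU U :=
  lineInt_zero_ofReal_mul hD ht s ▸ lineInt_mem ha hb (brkt_ne_zero_comm.1 hD) zero_mem he

end RU

section Powers

variable {α : ℂ}

local notation "𝒰" => ({1, α, α ^ 2, α ^ 3} : Set ℂ)

local notation "τ" => (2 * α.re : ℝ)

lemma norm_eq_one_of_mem_powers (hα : ‖α‖ = 1) : ∀ u ∈ 𝒰, ‖u‖ = 1 := by
  simp [hα]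

lemma brkt_sq_self (hα : ‖α‖ = 1) : brkt (α ^ 2) α = brkt α 1 := by
  simpa [sq] using brkt_mul_mul hα α 1

lemma brkt_cube_sq (hα : ‖α‖ = 1) : brkt (α ^ 3) (α ^ 2) = brkt α 1 := by
  rw [← brkt_sq_self hα, pow_succ' α 2, pow_succ' α 1, pow_one, brkt_mul_mul hα]

lemma brkt_cube_self (hα : ‖α‖ = 1) : brkt (α ^ 3) α = (τ : ℂ) * brkt α 1 := by
  rw [← brkt_sq_one, pow_succ' α 2, ← brkt_mul_mul hα (α ^ 2) 1, mul_one]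

lemma two_mul_re_mul_self (hα : ‖α‖ = 1) : (τ : ℂ) * α = 1 + α ^ 2 := by
  have hre := add_conj α
  have hnorm : conj α * α = 1 := by rw [conj_mul', hα]; norm_num
  linear_combination -α * hre + hnorm

lemma brkt_self_one_ne_zero (hα : ‖α‖ = 1) (h1 : α ^ 2 ≠ 1) : brkt α 1 ≠ 0 := by
  have hnorm : conj α * α = 1 := by rw [conj_mul', hα]; norm_num
  intro h
  apply h1
  simp only [brkt, map_one] at h
  linear_combination α * h + hnorm

lemma re_ne_zero_of_sq_ne_neg_one (hα : ‖α‖ = 1) (h2 : α ^ 2 ≠ -1) : α.re ≠ 0 := by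
  intro h
  have h' := two_mul_re_mul_self hα
  rw [h, mul_zero, ofReal_zero] at h'
  apply h2
  linear_combination -h'

lemma brkt_sq_one_ne_zero (hα : ‖α‖ = 1) (h1 : α ^ 2 ≠ 1) (h2 : α ^ 2 ≠ -1) :
    brkt (α ^ 2) 1 ≠ 0 := by
  rw [brkt_sq_one]
  simp [re_ne_zero_of_sq_ne_neg_one hα h2, brkt_self_one_ne_zero hα h1]

namespace RU

lemma two_mul_re_mul_self_mem (hα : ‖α‖ = 1) (h1 : α ^ 2 ≠ 1) : (τ : ℂ) * α ∈ RU 𝒰 := by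
  have h := ofReal_mul_mem_of_brkt_eq (U := 𝒰) (a := α) (b := α ^ 2) (s := 1) (t := τ)
    (by simp) (by simp) (by rw [brkt_sq_self hα]; exact brkt_self_one_ne_zero hα h1)
    (by rw [brkt_sq_one, brkt_sq_self hα]) (by simpa using one_mem)
  simpa using h

lemma sq_mem (hα : ‖α‖ = 1) (h1 : α ^ 2 ≠ 1) (h2 : α ^ 2 ≠ -1) : α ^ 2 ∈ RU 𝒰 := by
  have hre := re_ne_zero_of_sq_ne_neg_one hα h2
  have hre' : (α.re : ℂ) ≠ 0 := ofReal_ne_zero.2 hre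
  have h := ofReal_mul_mem_of_brkt_eq (U := 𝒰) (a := α ^ 2) (b := 1) (e := α) (s := τ)
    (t := τ⁻¹) (by simp) (by simp) (brkt_ne_zero_comm.2 (brkt_sq_one_ne_zero hα h1 h2))
    (by rw [brkt_swap α 1, brkt_swap (α ^ 2) 1, brkt_sq_one]; push_cast; field_simp)
    (two_mul_re_mul_self_mem hα h1)
  rwa [mul_inv_cancel₀ (by simpa using hre), ofReal_one, one_mul] at h

lemma two_mem (hα : ‖α‖ = 1) (h1 : α ^ 2 ≠ 1) (h2 : α ^ 2 ≠ -1) : (2 : ℂ) ∈ RU 𝒰 := by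
  have hβ := brkt_self_one_ne_zero hα h1
  have hre : (α.re : ℂ) ≠ 0 := ofReal_ne_zero.2 (re_ne_zero_of_sq_ne_neg_one hα h2)
  -- `1 + τ α = 2 + α²` completes the parallelogram on `1` and `τ α`; its projection onto the
  -- real axis along `α²` is `2`.
  have hpar : 1 + (τ : ℂ) * α ∈ RU 𝒰 := by
    have e := lineInt_ofReal_mul_ofReal_mul hβ 1 τ
    rw [ofReal_one, one_mul] at e
    exact e ▸ lineInt_mem (by simp) (by simp) hβ one_mem (two_mul_re_mul_self_mem hα h1)
  have e : lineInt 1 (α ^ 2) 0 (1 + (τ : ℂ) * α) = 2 := by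
    rw [lineInt_zero_left, brkt_add, brkt_ofReal_mul, brkt_sq_self hα, brkt_sq_one]
    push_cast
    field_simp
    ring
  exact e ▸ lineInt_mem (by simp) (by simp)
    (brkt_ne_zero_comm.2 (brkt_sq_one_ne_zero hα h1 h2)) zero_mem hpar

lemma ofReal_div_mem_of_mul_self_mem (hα : ‖α‖ = 1) (h1 : α ^ 2 ≠ 1) (h2 : α ^ 2 ≠ -1)
    {r : ℝ} (h : (r : ℂ) * α ∈ RU 𝒰) : ((r / τ : ℝ) : ℂ) ∈ RU 𝒰 := by
  have hre : (α.re : ℂ) ≠ 0 := ofReal_ne_zero.2 (re_ne_zero_of_sq_ne_neg_one hα h2)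
  have h' := ofReal_mul_mem_of_brkt_eq (U := 𝒰) (a := 1) (b := α ^ 2) (t := τ⁻¹)
    (by simp) (by simp) (brkt_sq_one_ne_zero hα h1 h2)
    (by rw [brkt_sq_self hα, brkt_sq_one]; push_cast; field_simp) h
  simpa [div_eq_mul_inv] using h'

lemma neg_ofReal_mem_of_mul_sq_mem (hα : ‖α‖ = 1) (h1 : α ^ 2 ≠ 1) {r : ℝ}
    (h : (r : ℂ) * α ^ 2 ∈ RU 𝒰) : ((-r : ℝ) : ℂ) ∈ RU 𝒰 := by
  have h' := ofReal_mul_mem_of_brkt_eq (U := 𝒰) (a := 1) (b := α) (t := -1)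
    (by simp) (by simp) (by simpa using brkt_self_one_ne_zero hα h1)
    (by rw [brkt_swap, brkt_sq_self hα]; simp) h
  simpa using h'

lemma neg_ofReal_div_mem_of_mul_cube_mem (hα : ‖α‖ = 1) (h1 : α ^ 2 ≠ 1)
    (h2 : α ^ 2 ≠ -1) {r : ℝ} (h : (r : ℂ) * α ^ 3 ∈ RU 𝒰) :
    ((-(r / τ) : ℝ) : ℂ) ∈ RU 𝒰 := by
  have hre : (α.re : ℂ) ≠ 0 := ofReal_ne_zero.2 (re_ne_zero_of_sq_ne_neg_one hα h2)
  have h' := ofReal_mul_mem_of_brkt_eq (U := 𝒰) (a := 1) (b := α ^ 2) (t := -τ⁻¹)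
    (by simp) (by simp) (brkt_sq_one_ne_zero hα h1 h2)
    (by rw [brkt_swap, brkt_cube_sq hα, brkt_sq_one]; push_cast; field_simp) h
  simpa [div_eq_mul_inv] using h'

lemma neg_ofReal_mul_mem_of_mul_cube_mem (hα : ‖α‖ = 1) (h1 : α ^ 2 ≠ 1) {r : ℝ}
    (h : (r : ℂ) * α ^ 3 ∈ RU 𝒰) : ((-(r * τ) : ℝ) : ℂ) ∈ RU 𝒰 := by
  have h' := ofReal_mul_mem_of_brkt_eq (U := 𝒰) (a := 1) (b := α) (t := -τ)
    (by simp) (by simp) (by simpa using brkt_self_one_ne_zero hα h1)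
    (by rw [brkt_swap, brkt_cube_self hα]; simp) h
  simpa using h'

lemma neg_one_mem (hα : ‖α‖ = 1) (h1 : α ^ 2 ≠ 1) (h2 : α ^ 2 ≠ -1) :
    (-1 : ℂ) ∈ RU 𝒰 := by
  simpa using neg_ofReal_mem_of_mul_sq_mem hα h1 (r := 1) (by simpa using sq_mem hα h1 h2)

lemma two_mul_re_sq_mem (hα : ‖α‖ = 1) (h1 : α ^ 2 ≠ 1) : ((τ ^ 2 : ℝ) : ℂ) ∈ RU 𝒰 := by
  have hβ : brkt (α ^ 2) (α ^ 3) ≠ 0 := by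
    rw [brkt_swap, brkt_cube_sq hα]
    simpa using brkt_self_one_ne_zero hα h1
  have h := ofReal_mul_mem_of_brkt_eq (U := 𝒰) (a := α ^ 3) (b := α ^ 2) (s := 1) (t := -τ)
    (by simp) (by simp) hβ
    (by rw [brkt_sq_one, brkt_swap (α ^ 3), brkt_cube_sq hα]; push_cast; ring)
    (by simpa using one_mem)
  simpa [sq] using neg_ofReal_mul_mem_of_mul_cube_mem hα h1 h

lemma add_mem (hα : ‖α‖ = 1) (h1 : α ^ 2 ≠ 1) (h2 : α ^ 2 ≠ -1) {z w : ℂ}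
    (hz : z ∈ RU 𝒰) (hw : w ∈ RU 𝒰) : z + w ∈ RU 𝒰 :=
  add_mem_of_two_mem (norm_eq_one_of_mem_powers hα) (two_mem hα h1 h2) hz hw

lemma neg_mem (hα : ‖α‖ = 1) (h1 : α ^ 2 ≠ 1) (h2 : α ^ 2 ≠ -1) {z : ℂ}
    (hz : z ∈ RU 𝒰) : -z ∈ RU 𝒰 :=
  neg_mem_of_neg_one_mem (norm_eq_one_of_mem_powers hα) (neg_one_mem hα h1 h2) hz

lemma exists_ofReal_mul_eq_ofReal_add_ofReal_mul_sq (hα : ‖α‖ = 1) (h1 : α ^ 2 ≠ 1)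
    (h2 : α ^ 2 ≠ -1) {u : ℂ} (hu : u ∈ 𝒰) {r : ℝ} (h : (r : ℂ) * u ∈ RU 𝒰) :
    ∃ a b : ℝ, (a : ℂ) ∈ RU 𝒰 ∧ (b : ℂ) ∈ RU 𝒰 ∧ (r : ℂ) * u = a + b * α ^ 2 := by
  have hre : (α.re : ℂ) ≠ 0 := ofReal_ne_zero.2 (re_ne_zero_of_sq_ne_neg_one hα h2)
  have hτα := two_mul_re_mul_self hα
  push_cast at hτα
  simp only [Set.mem_insert_iff, Set.mem_singleton_iff] at hu
  obtain hu | hu | hu | hu := hu <;> subst u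
  · exact ⟨r, 0, by simpa using h, by simpa using zero_mem, by simp⟩
  · have hr := ofReal_div_mem_of_mul_self_mem hα h1 h2 h
    refine ⟨r / τ, r / τ, hr, hr, ?_⟩
    push_cast
    field_simp
    linear_combination r * hτα
  · refine ⟨0, r, by simpa using zero_mem, ?_, by simp⟩
    simpa using neg_mem hα h1 h2 (neg_ofReal_mem_of_mul_sq_mem hα h1 h)
  · have hr := neg_ofReal_div_mem_of_mul_cube_mem hα h1 h2 h
    have hτ2 : ((1 - τ ^ 2 : ℝ) : ℂ) ∈ RU 𝒰 := by
      have := add_mem hα h1 h2 one_mem (neg_mem hα h1 h2 (two_mul_re_sq_mem hα h1))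
      push_cast at this ⊢
      simpa [sub_eq_add_neg] using this
    refine ⟨-(r / τ), -(r / τ) * (1 - τ ^ 2), hr, ?_, ?_⟩
    · rw [ofReal_mul]
      exact ofReal_mul_mem (norm_eq_one_of_mem_powers hα) hr hτ2
    · push_cast
      field_simp
      linear_combination (-(2 * α.re : ℂ) * α - 1) * r * hτα

lemma exists_eq_ofReal_add_ofReal_mul_sq (hα : ‖α‖ = 1) (h1 : α ^ 2 ≠ 1) (h2 : α ^ 2 ≠ -1)
    {z : ℂ} (hz : z ∈ RU 𝒰) :
    ∃ a b : ℝ, (a : ℂ) ∈ RU 𝒰 ∧ (b : ℂ) ∈ RU 𝒰 ∧ z = a + b * α ^ 2 := by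
  have hadd := @add_mem _ hα h1 h2
  obtain rfl | rfl | ⟨u, hu, v, hv, r, s, hr, hs, rfl⟩ :=
    eq_zero_or_eq_one_or_eq_add (norm_eq_one_of_mem_powers hα) hz
  · exact ⟨0, 0, by simpa using zero_mem, by simpa using zero_mem, by simp⟩
  · exact ⟨1, 0, by simpa using one_mem, by simpa using zero_mem, by simp⟩
  · obtain ⟨a, b, ha, hb, e⟩ := exists_ofReal_mul_eq_ofReal_add_ofReal_mul_sq hα h1 h2 hu hr
    obtain ⟨a', b', ha', hb', e'⟩ :=
      exists_ofReal_mul_eq_ofReal_add_ofReal_mul_sq hα h1 h2 hv hs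
    refine ⟨a + a', b + b', by push_cast; exact hadd ha ha', by push_cast; exact hadd hb hb', ?_⟩
    rw [e, e']
    push_cast
    ring

lemma sq_mul_mem (hα : ‖α‖ = 1) (h1 : α ^ 2 ≠ 1) (h2 : α ^ 2 ≠ -1) {w : ℂ}
    (hw : w ∈ RU 𝒰) : α ^ 2 * w ∈ RU 𝒰 := by
  have hU := norm_eq_one_of_mem_powers hα
  have hadd := @add_mem _ hα h1 h2
  have hsq := sq_mem hα h1 h2
  have hneg := neg_one_mem hα h1 h2
  have h4 : α ^ 4 ∈ RU 𝒰 := by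
    have hτ2 : ((τ ^ 2 - 2 : ℝ) : ℂ) ∈ RU 𝒰 := by
      have := hadd (hadd (two_mul_re_sq_mem hα h1) hneg) hneg
      push_cast at this ⊢
      convert this using 1
      ring
    have hτα := two_mul_re_mul_self hα
    convert hadd (ofReal_mul_mem hU hτ2 hsq) hneg using 1
    push_cast at hτα ⊢
    linear_combination -(α ^ 2 + 1 + 2 * α.re * α) * hτα
  obtain ⟨a, b, ha, hb, rfl⟩ := exists_eq_ofReal_add_ofReal_mul_sq hα h1 h2 hw
  convert hadd (ofReal_mul_mem hU ha hsq) (ofReal_mul_mem hU hb h4) using 1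
  ring

lemma mul_mem (hα : ‖α‖ = 1) (h1 : α ^ 2 ≠ 1) (h2 : α ^ 2 ≠ -1) {z w : ℂ}
    (hz : z ∈ RU 𝒰) (hw : w ∈ RU 𝒰) : z * w ∈ RU 𝒰 := by
  have hU := norm_eq_one_of_mem_powers hα
  obtain ⟨a, b, ha, hb, rfl⟩ := exists_eq_ofReal_add_ofReal_mul_sq hα h1 h2 hz
  convert add_mem hα h1 h2 (ofReal_mul_mem hU ha hw)
    (ofReal_mul_mem hU hb (sq_mul_mem hα h1 h2 hw)) using 1
  ring

end RU

end Powers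

theorem stmt17_general (α : ℂ) (hα : ‖α‖ = 1)
    (h1b : α ^ 2 ≠ 1) (h1b' : α ^ 2 ≠ -1) :
    ∃ A : Subring ℂ, (A : Set ℂ) = RU {1, α, α ^ 2, α ^ 3} :=
  ⟨{ carrier := RU {1, α, α ^ 2, α ^ 3}
     zero_mem' := RU.zero_mem
     one_mem' := RU.one_mem
     add_mem' := RU.add_mem hα h1b h1b'
     neg_mem' := RU.neg_mem hα h1b h1b'
     mul_mem' := RU.mul_mem hα h1b h1b' }, rfl⟩

/-- if `1, α, α², α³` are pairwise non-±-equal unit complex numbers, then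
`R({1, α, α², α³})` is a subring of `ℂ`. -/
theorem stmt17 (α : ℂ) (hα : ‖α‖ = 1)
    (h1a : α ≠ 1) (h1a' : α ≠ -1)
    (h1b : α ^ 2 ≠ 1) (h1b' : α ^ 2 ≠ -1)
    (h1c : α ^ 3 ≠ 1) (h1c' : α ^ 3 ≠ -1)
    (hab : α ≠ α ^ 2) (hab' : α ≠ -α ^ 2)
    (hac : α ≠ α ^ 3) (hac' : α ≠ -α ^ 3)
    (hbc : α ^ 2 ≠ α ^ 3) (hbc' : α ^ 2 ≠ -α ^ 3) :
    ∃ A : Subring ℂ, (A : Set ℂ) = RU {1, α, α ^ 2, α ^ 3} :=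
  stmt17_general α hα h1b h1b'
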